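/- arXiv:2509.15863 — 3 statements merged into one kernel-verified Lean document; each statement's English description precedes it below -/
import Mathlib

section
/- Let g_{ab} be a symmetric invertible matrix and R^d_{ab} antisymmetric in a,b. Then φ satisfies the φ-simplicity identity R^d_{ab} = -φ_a δ^d_b + φ_b δ^d_a if and only if for all a,b,c: φ_b g_{ac} - φ_c g_{ab} + R^d_{bc} g_{da} = 0. -/
/-! Lowering the upper index of both sides of the φ-simplicity identity with `g` gives exactly the
wedge identity (the index order matches because `g` is symmetric), and since `g` is invertible,
lowering an index loses no information. -/

open Finset Matrix

theorem sum_mul_eq_sum_mul_iff_of_isUnit {ι R : Type*} [Fintype ι] [DecidableEq ι] [Semiring R]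
    {M : Matrix ι ι R} (hM : IsUnit M) (v w : ι → R) :
    (∀ i, v i = w i) ↔ ∀ j, ∑ i, v i * M i j = ∑ i, w i * M i j := by
  rw [← funext_iff, ← (vecMul_injective_of_isUnit hM).eq_iff, funext_iff]
  rfl

theorem sum_phiSimple_mul {ι R : Type*} [Fintype ι] [DecidableEq ι] [Ring R]
    (φ : ι → R) (g : Matrix ι ι R) (a b c : ι) :
    ∑ d, (-φ a * (if d = b then (1 : R) else 0) + φ b * (if d = a then (1 : R) else 0)) * g d c
      = φ b * g a c - φ a * g b c := by
  simp only [add_mul, mul_assoc, ite_mul, one_mul, zero_mul, mul_ite, mul_zero, sum_add_distrib,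
    sum_ite_eq', mem_univ, if_true]
  noncomm_ring

theorem phi_simple_iff_wedge_general {n : ℕ}
    (g : Matrix (Fin n) (Fin n) ℝ) (hgsymm : g.IsSymm) (hginv : IsUnit g.det)
    (R : Fin n → Fin n → Fin n → ℝ)
    (φ : Fin n → ℝ) :
    (∀ a b d, R d a b = -φ a * (if d = b then (1:ℝ) else 0)
        + φ b * (if d = a then (1:ℝ) else 0)) ↔
    (∀ a b c, φ b * g a c - φ c * g a b + ∑ d, R d b c * g d a = 0) := by
  have hg : IsUnit g := (isUnit_iff_isUnit_det g).2 hginv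
  have lower := fun a b => sum_mul_eq_sum_mul_iff_of_isUnit hg (fun d => R d a b)
    (fun d => -φ a * (if d = b then (1:ℝ) else 0) + φ b * (if d = a then (1:ℝ) else 0))
  simp only [lower, sum_phiSimple_mul]
  constructor
  · intro h c a b
    rw [hgsymm.apply b c, hgsymm.apply a c, h a b c]
    ring
  · intro h a b c
    have := h c a b
    rw [hgsymm.apply b c, hgsymm.apply a c] at this
    linarith

/-- `φ`-simplicity `R^d_{ab} = -φ_a δ^d_b + φ_b δ^d_a` holds iff
`φ_b g_{ac} - φ_c g_{ab} + R^d_{bc} g_{da} = 0` for all `a,b,c`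
(the coordinate form of `dφ ∧ θ_l = Ξ^G`). -/
theorem phi_simple_iff_wedge {n : ℕ} (hn : 1 ≤ n)
    (g : Matrix (Fin n) (Fin n) ℝ) (hgsymm : g.IsSymm) (hginv : IsUnit g.det)
    (R : Fin n → Fin n → Fin n → ℝ) (hRanti : ∀ d a b, R d a b = -R d b a)
    (φ : Fin n → ℝ) :
    (∀ a b d, R d a b = -φ a * (if d = b then (1:ℝ) else 0)
        + φ b * (if d = a then (1:ℝ) else 0)) ↔
    (∀ a b c, φ b * g a c - φ c * g a b + ∑ d, R d b c * g d a = 0) :=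
  phi_simple_iff_wedge_general g hgsymm hginv R φ
end

section
/- Suppose the symmetrized condition (A'): ḡ_{bk}R^k_{ac} + ḡ_{ak}R^k_{bc} - g_{bc}f_a - g_{ac}f_b + 2g_{ab}f_c = 0 holds for all a,b,c. Then for all a,b,c: f_b g_{ac} - f_c g_{ab} = (1/3)(ḡ_{bk}R^k_{ac} - ḡ_{ck}R^k_{ab} + 2ḡ_{ak}R^k_{bc}), and conversely this identity for all a,b,c implies (A'). -/
theorem Fintype.sum_mul_antisymm {ι κ 𝕜 : Type*} [Fintype ι] [Ring 𝕜]
    (c : ι → 𝕜) (A : ι → κ → κ → 𝕜) (hA : ∀ k u v, A k u v = -A k v u) (u v : κ) :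
    ∑ k, c k * A k u v = -∑ k, c k * A k v u := by
  simp only [hA _ u v, mul_neg, Finset.sum_neg_distrib]

/-- The symmetric condition (A') holds for all `a,b,c` iff the identity
`f_b g_{ac} - f_c g_{ab} = (1/3)(ḡ_{bk}R^k_{ac} - ḡ_{ck}R^k_{ab} + 2ḡ_{ak}R^k_{bc})`
(the coordinate form of `df ∧ θ_l = γ`) holds for all `a,b,c`. -/
theorem Aprime_iff_wedge {m p : ℕ}
    (g : Fin m → Fin m → ℝ) (hgsymm : ∀ a b, g a b = g b a)
    (gbar : Fin m → Fin p → ℝ) (f : Fin m → ℝ)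
    (R : Fin p → Fin m → Fin m → ℝ) (hRanti : ∀ k a b, R k a b = -R k b a) :
    (∀ a b c, (∑ k, gbar b k * R k a c) + (∑ k, gbar a k * R k b c)
        - g b c * f a - g a c * f b + 2 * g a b * f c = 0) ↔
    (∀ a b c, f b * g a c - f c * g a b
        = (1/3) * ((∑ k, gbar b k * R k a c) - (∑ k, gbar c k * R k a b)
            + 2 * ∑ k, gbar a k * R k b c)) := by
  have hS := fun x ↦ Fintype.sum_mul_antisymm (gbar x) R hRanti
  constructor
  · -- the identity at `(a,b,c)` is a third of (A') at `(a,b,c)` plus (A') at `(c,a,b)`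
    intro hA a b c
    have hcab := hA c a b
    rw [hS a c b, hgsymm c b, hgsymm c a] at hcab
    linarith [hA a b c]
  · -- (A') at `(a,b,c)` is the sum of the identity at `(a,b,c)` and at `(b,a,c)`
    intro hW a b c
    have hbac := hW b a c
    rw [hS c b a, hgsymm b a] at hbac
    linarith [hW a b c]
end

section
/- If the condition (A')^G holds: G_{bk}R^k_{ac} + G_{ak}R^k_{bc} + g_{bc}f_a + g_{ac}f_b - 2g_{ab}f_c = 0 for all a,b,c, and in addition the cyclic condition G_{bk}R^k_{ca} + G_{ck}R^k_{ab} + G_{ak}R^k_{bc} = 0 holds for all a,b,c, together with the compatibility g_{ad}R^d_{bc} = G_{ak}R^k_{bc}, then φ = f satisfies the φ-simplicity property g_{cd}R^d_{ab} = g_{ca}f_b - g_{cb}f_a for all a,b,c. -/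
/-!
Write `T_{eab} = G_{ek} R^k_{ab}`, antisymmetric in `a, b` with vanishing cyclic sum. Like a
curvature tensor, such a `T` is recovered from its symmetrisation `S_{eab} = T_{eab} + T_{aeb}`
in the first two slots: `3 T_{cab} = S_{cab} - S_{cba}`. Condition `(A')^G` computes `S` in terms
of `g` and `f`, and `g_{ed}R^d_{ab} = T_{eab}` turns the result into `φ`-simplicity.
-/

theorem sum_mul_antisymm {κ ι R : Type*} [Fintype κ] [CommRing R]
    (G : κ → R) (Rk : κ → ι → ι → R) (hRk : ∀ k a b, Rk k a b = -Rk k b a) (a b : ι) :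
    ∑ k, G k * Rk k a b = -∑ k, G k * Rk k b a := by
  simp only [hRk _ a b, mul_neg, Finset.sum_neg_distrib]

theorem three_mul_eq_sub_of_antisymm_of_cyclic {ι R : Type*} [CommRing R]
    (T : ι → ι → ι → R) (hanti : ∀ e a b, T e a b = -T e b a)
    (hcyc : ∀ a b c, T b c a + T c a b + T a b c = 0) (a b c : ι) :
    3 * T c a b = (T c a b + T a c b) - (T c b a + T b c a) := by
  linear_combination hcyc a b c + hanti c a b - hanti a b c

theorem phi_simple_of_AprimeG_and_cyclic_general {m p : ℕ}
    (g : Matrix (Fin m) (Fin m) ℝ) (hgsymm : g.IsSymm)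
    (G : Fin m → Fin p → ℝ) (f : Fin m → ℝ)
    (Rk : Fin p → Fin m → Fin m → ℝ) (hRk : ∀ k a b, Rk k a b = -Rk k b a)
    (Rd : Fin m → Fin m → Fin m → ℝ)
    (hcompat : ∀ e a b, (∑ d, g e d * Rd d a b) = ∑ k, G e k * Rk k a b)
    (hA : ∀ a b c, (∑ k, G b k * Rk k a c) + (∑ k, G a k * Rk k b c)
        + g b c * f a + g a c * f b - 2 * g a b * f c = 0)
    (hcyc : ∀ a b c, (∑ k, G b k * Rk k c a) + (∑ k, G c k * Rk k a b)
        + (∑ k, G a k * Rk k b c) = 0) :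
    ∀ a b c, (∑ d, g c d * Rd d a b) = g c a * f b - g c b * f a := by
  intro a b c
  rw [hcompat]
  have h3 := three_mul_eq_sub_of_antisymm_of_cyclic (fun e u v => ∑ k, G e k * Rk k u v)
    (fun e => sum_mul_antisymm (G e) Rk hRk) hcyc a b c
  linear_combination (h3 + hA c a b - hA c b a + f c * hgsymm.apply a b) / 3

/-- If `(A')^G` holds together with the cyclic condition and the compatibility
`g_{ed}R^d_{ab} = G_{ek}R^k_{ab}`, then `φ = f` satisfies the `φ`-simplicity property
`g_{cd}R^d_{ab} = g_{ca} f_b - g_{cb} f_a`. -/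
theorem phi_simple_of_AprimeG_and_cyclic {m p : ℕ}
    (g : Matrix (Fin m) (Fin m) ℝ) (hgsymm : g.IsSymm) (hginv : IsUnit g.det)
    (G : Fin m → Fin p → ℝ) (f : Fin m → ℝ)
    (Rk : Fin p → Fin m → Fin m → ℝ) (hRk : ∀ k a b, Rk k a b = -Rk k b a)
    (Rd : Fin m → Fin m → Fin m → ℝ) (hRd : ∀ d a b, Rd d a b = -Rd d b a)
    (hcompat : ∀ e a b, (∑ d, g e d * Rd d a b) = ∑ k, G e k * Rk k a b)
    (hA : ∀ a b c, (∑ k, G b k * Rk k a c) + (∑ k, G a k * Rk k b c)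
        + g b c * f a + g a c * f b - 2 * g a b * f c = 0)
    (hcyc : ∀ a b c, (∑ k, G b k * Rk k c a) + (∑ k, G c k * Rk k a b)
        + (∑ k, G a k * Rk k b c) = 0) :
    ∀ a b c, (∑ d, g c d * Rd d a b) = g c a * f b - g c b * f a :=
  phi_simple_of_AprimeG_and_cyclic_general g hgsymm G f Rk hRk Rd hcompat hA hcyc
end
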